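/- arXiv:1405.7488 — 2 statements merged into one kernel-verified Lean document; each statement's English description precedes it below -/
import Mathlib

section
/- For the Markov control process of the solitaire Ten Thousand game with value-iteration operator U and W_k = U^k applied to the zero function: for every k ≥ 1, W_k(τ,i,n) = τ whenever τ ≥ 56, and W_k(τ,i,n) < 56 whenever τ < 56. -/
/-- A dice configuration `[f, o, t]`: `f` fives, `o` ones, and a
three-of-a-kind of value `t ∈ {2,3,4,6}` (`t = 0` meaning none). -/
abbrev Config := ℕ × ℕ × ℕ

/-- Score (in chips) of a configuration. -/
def score : Config → ℕ
  | (f, o, t) => f + 2 * o + (if 3 ≤ o then 14 else 0) + (if 3 ≤ f then 7 else 0) + 2 * t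

/-- Number of scoring dice of a configuration. -/
def dice : Config → ℕ
  | (f, o, t) => f + o + (if t ≠ 0 then 3 else 0)

/-- Number of scoring combinations of a configuration. -/
def combs : Config → ℕ
  | (f, o, t) => f + o + (if t ≠ 0 then 1 else 0)

/-- The table of scoring configurations together with the frequencies
`(f(1,i), f(2,i), f(3,i), f(4,i), f(5,i))` of each configuration among
the `6^n` outcomes of a roll of `n` dice. -/
def freqTable : List (Config × (ℕ × ℕ × ℕ × ℕ × ℕ)) :=
  [((1,0,0), (1, 8, 48, 240, 1020)),
   ((0,1,0), (1, 8, 48, 240, 1020)),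
   ((2,0,0), (0, 1, 12, 96, 600)),
   ((1,1,0), (0, 2, 24, 192, 1200)),
   ((0,2,0), (0, 1, 12, 96, 600)),
   ((3,0,0), (0, 0, 1, 16, 160)),
   ((2,1,0), (0, 0, 3, 48, 480)),
   ((1,2,0), (0, 0, 3, 48, 480)),
   ((0,3,0), (0, 0, 1, 16, 160)),
   ((0,0,2), (0, 0, 1, 13, 106)),
   ((0,0,3), (0, 0, 1, 13, 106)),
   ((0,0,4), (0, 0, 1, 13, 106)),
   ((0,0,6), (0, 0, 1, 13, 106)),
   ((4,0,0), (0, 0, 0, 1, 20)),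
   ((3,1,0), (0, 0, 0, 4, 80)),
   ((2,2,0), (0, 0, 0, 6, 120)),
   ((1,3,0), (0, 0, 0, 4, 80)),
   ((0,4,0), (0, 0, 0, 1, 20)),
   ((1,0,2), (0, 0, 0, 4, 65)),
   ((1,0,3), (0, 0, 0, 4, 65)),
   ((1,0,4), (0, 0, 0, 4, 65)),
   ((1,0,6), (0, 0, 0, 4, 65)),
   ((0,1,2), (0, 0, 0, 4, 65)),
   ((0,1,3), (0, 0, 0, 4, 65)),
   ((0,1,4), (0, 0, 0, 4, 65)),
   ((0,1,6), (0, 0, 0, 4, 65)),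
   ((5,0,0), (0, 0, 0, 0, 1)),
   ((4,1,0), (0, 0, 0, 0, 5)),
   ((3,2,0), (0, 0, 0, 0, 10)),
   ((2,3,0), (0, 0, 0, 0, 10)),
   ((1,4,0), (0, 0, 0, 0, 5)),
   ((0,5,0), (0, 0, 0, 0, 1)),
   ((2,0,2), (0, 0, 0, 0, 10)),
   ((2,0,3), (0, 0, 0, 0, 10)),
   ((2,0,4), (0, 0, 0, 0, 10)),
   ((2,0,6), (0, 0, 0, 0, 10)),
   ((1,1,2), (0, 0, 0, 0, 20)),
   ((1,1,3), (0, 0, 0, 0, 20)),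
   ((1,1,4), (0, 0, 0, 0, 20)),
   ((1,1,6), (0, 0, 0, 0, 20)),
   ((0,2,2), (0, 0, 0, 0, 10)),
   ((0,2,3), (0, 0, 0, 0, 10)),
   ((0,2,4), (0, 0, 0, 0, 10)),
   ((0,2,6), (0, 0, 0, 0, 10))]

/-- The set of scoring configurations. -/
def scoringConfigs : Finset Config := (freqTable.map Prod.fst).toFinset

/-- `freq n i` = number of outcomes of a roll of `n` dice giving the scoring
configuration `i` (0 if `i` is not a scoring configuration). -/
def freq (n : ℕ) (i : Config) : ℕ :=
  match freqTable.find? (fun e => decide (e.1 = i)) with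
  | some e =>
    match n with
    | 1 => e.2.1
    | 2 => e.2.2.1
    | 3 => e.2.2.2.1
    | 4 => e.2.2.2.2.1
    | 5 => e.2.2.2.2.2
    | _ => 0
  | none => 0

/-- `fEmpty n` = number of non-scoring outcomes of a roll of `n` dice. -/
def fEmpty : ℕ → ℕ
  | 1 => 4
  | 2 => 16
  | 3 => 60
  | 4 => 204
  | 5 => 600
  | _ => 0

/-- `j ≺ i`: configuration `j` is obtained from `i` by removing a nonempty
proper subset of its scoring combinations. -/
def Smaller (j i : Config) : Prop :=
  j.1 ≤ i.1 ∧ j.2.1 ≤ i.2.1 ∧ (j.2.2 = 0 ∨ j.2.2 = i.2.2) ∧ j ≠ i ∧ 0 < combs j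

instance : DecidablePred fun p : Config × Config => Smaller p.1 p.2 := by
  intro p; unfold Smaller; infer_instance

instance (i : Config) : DecidablePred (Smaller · i) := by
  intro j; unfold Smaller; infer_instance

/-- A (non-terminal) state `(τ, i, n)` of the solitaire Ten Thousand game:
accumulated chips `τ`, last configuration `i`, `n` dice available.  The
absorbing state `Δ` is not represented: its value is always `0`. -/
abbrev GState := ℕ × Config × ℕ

/-- Value of the action roll from accumulated score `τ` with `n` dice, given
a value function `V`: transition to `(τ + s(k), k, n − d(k) + 5·1{n = d(k)})`
with probability `f(n,k)/6^n`, and to the absorbing state `Δ` (value 0)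
with probability `f(n,∅)/6^n`. -/
noncomputable def rollVal (V : GState → ℝ) (τ n : ℕ) : ℝ :=
  ∑ k ∈ scoringConfigs,
    ((freq n k : ℝ) / 6 ^ n) * V (τ + score k, k, if n = dice k then 5 else n - dice k)

/-- Value of the best available move action (`0` if no move is available):
a move to `j ≺ i` transitions deterministically to
`(τ − s(i) + s(j), j, n + d(i) − d(j))`; moves are available only when
`n < 5` and `c(i) > 1`. -/
noncomputable def moveVal (V : GState → ℝ) : GState → ℝ
  | (τ, i, n) =>
    if n < 5 ∧ 1 < combs i then
      sSup ((fun j => V (τ - score i + score j, j, n + dice i - dice j)) ''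
        {j | Smaller j i})
    else 0

/-- The Bellman (value iteration) operator `U` of the solitaire Ten Thousand
game: maximum over the actions stop (reward `τ`), roll, and moves. -/
noncomputable def U (V : GState → ℝ) : GState → ℝ
  | (τ, i, n) => max (τ : ℝ) (max (rollVal V τ n) (moveVal V (τ, i, n)))

/-- `W k = U^k 0`, the `k`-th value iterate starting from the zero function. -/
noncomputable def W (k : ℕ) : GState → ℝ := U^[k] (fun _ => 0)

/-- `V* = lim_k W k = sup_k W k`, the value function of the game. -/
noncomputable def Vstar (x : GState) : ℝ := ⨆ k, W k x

/-! Value iteration preserves the bound `V (τ, i, n) ≤ max τ (111/2)` on states with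
`s(i) ≤ 111/2`. Moves never raise the score; from `τ ≥ 56` a roll loses in expectation because
`∑ₖ f(n,k) s(k) ≤ 56 f(n,∅)`; from `τ ≤ 55` the frequency table shows that a roll followed by this
bound averages at most `111/2`. Since stopping gives `U V (τ, i, n) ≥ τ`, every `W (k + 1)` is
squeezed between `τ` and `max τ (111/2)`. -/

theorem Smaller.score_le {i j : Config} (h : Smaller j i) : score j ≤ score i := by
  obtain ⟨f, o, t⟩ := i
  obtain ⟨f', o', t'⟩ := j
  obtain ⟨hf, ho, ht, -⟩ := h
  dsimp only at hf ho ht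
  simp only [score]
  rcases ht with rfl | rfl <;> split_ifs <;> omega

theorem score_le_of_mem_scoringConfigs {i : Config} (hi : i ∈ scoringConfigs) : score i ≤ 24 := by
  revert i; decide

theorem freq_eq_zero_of_notMem {n : ℕ} (hn : n ∉ Finset.Icc 1 5) (i : Config) : freq n i = 0 := by
  obtain rfl | h : n = 0 ∨ 6 ≤ n := by simp only [Finset.mem_Icc, not_and_or] at hn; omega
  · unfold freq; split <;> rfl
  · obtain ⟨m, rfl⟩ := Nat.exists_eq_add_of_le' h
    unfold freq; split <;> rfl

theorem sum_freq_mul_add_score_le (n : ℕ) {τ : ℕ} (hτ : 56 ≤ τ) :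
    ∑ k ∈ scoringConfigs, freq n k * (τ + score k) ≤ τ * 6 ^ n := by
  by_cases hn : n ∈ Finset.Icc 1 5
  · have htable : ∀ n ∈ Finset.Icc 1 5,
        ∑ k ∈ scoringConfigs, freq n k * score k ≤ 56 * fEmpty n ∧
        ∑ k ∈ scoringConfigs, freq n k + fEmpty n = 6 ^ n := by decide
    obtain ⟨hscore, hcount⟩ := htable n hn
    simp only [Nat.mul_add, Finset.sum_add_distrib, ← Finset.sum_mul]
    rw [← hcount]
    nlinarith
  · simp [freq_eq_zero_of_notMem hn]

-- `111` is twice the bound on values below `56`; any bound between `35683/648 ≈ 55.07` (reached at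
-- `n = 5`, `τ = 55`) and `56` would do.
theorem sum_freq_mul_max_le (n : ℕ) {τ : ℕ} (hτ : τ ≤ 55) :
    ∑ k ∈ scoringConfigs, freq n k * max (2 * (τ + score k)) 111 ≤ 111 * 6 ^ n := by
  by_cases hn : n ∈ Finset.Icc 1 5
  · have htable : ∀ n ∈ Finset.Icc 1 5, ∀ τ ∈ Finset.range 56,
        ∑ k ∈ scoringConfigs, freq n k * max (2 * (τ + score k)) 111 ≤ 111 * 6 ^ n := by decide
    exact htable n hn τ (Finset.mem_range.2 (by omega))
  · simp [freq_eq_zero_of_notMem hn]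

theorem rollVal_eq_sum_div (V : GState → ℝ) (τ n : ℕ) :
    rollVal V τ n = (∑ k ∈ scoringConfigs,
      freq n k * V (τ + score k, k, if n = dice k then 5 else n - dice k)) / 6 ^ n := by
  rw [rollVal, Finset.sum_div]
  exact Finset.sum_congr rfl fun k _ => by ring

theorem rollVal_stop_le_self {B : ℝ} (hB : B ≤ 56) {τ : ℕ} (hτ : 56 ≤ τ) (n : ℕ) :
    rollVal (fun x => max (x.1 : ℝ) B) τ n ≤ τ := by
  have hstop : ∀ k, max ((τ + score k : ℕ) : ℝ) B = (τ + score k : ℕ) := fun k =>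
    max_eq_left (hB.trans (by exact_mod_cast le_add_right hτ))
  rw [rollVal_eq_sum_div, div_le_iff₀ (by positivity)]
  simp only [hstop]
  exact_mod_cast sum_freq_mul_add_score_le n hτ

theorem rollVal_stop_le_const {τ : ℕ} (hτ : τ ≤ 55) (n : ℕ) :
    rollVal (fun x => max (x.1 : ℝ) (111 / 2)) τ n ≤ 111 / 2 := by
  have hhalf : ∀ k, max ((τ + score k : ℕ) : ℝ) (111 / 2) =
      ((max (2 * (τ + score k)) 111 : ℕ) : ℝ) / 2 := fun k => by
    push_cast
    rw [← max_div_div_right zero_le_two, mul_div_cancel_left₀ _ two_ne_zero]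
  have hsum : ((∑ k ∈ scoringConfigs, freq n k * max (2 * (τ + score k)) 111 : ℕ) : ℝ) ≤
      111 * 6 ^ n := by
    exact_mod_cast sum_freq_mul_max_le n hτ
  rw [rollVal_eq_sum_div, div_le_iff₀ (by positivity)]
  simp only [hhalf, mul_div_assoc', ← Finset.sum_div]
  push_cast at hsum ⊢
  linarith

def StopBounded (B : ℝ) (V : GState → ℝ) : Prop :=
  ∀ τ i n, (score i : ℝ) ≤ B → V (τ, i, n) ≤ max (τ : ℝ) B

theorem stopBounded_zero {B : ℝ} (hB : 0 ≤ B) : StopBounded B fun _ => 0 :=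
  fun _ _ _ _ => le_max_of_le_right hB

theorem moveVal_le_of_stopBounded {B : ℝ} {V : GState → ℝ} (hV : StopBounded B V) (τ : ℕ)
    {i : Config} (hi : (score i : ℝ) ≤ B) (n : ℕ) : moveVal V (τ, i, n) ≤ max (τ : ℝ) B := by
  have hnonneg : (0 : ℝ) ≤ max (τ : ℝ) B := le_max_of_le_left τ.cast_nonneg
  simp only [moveVal]
  split_ifs
  · refine Real.sSup_le ?_ hnonneg
    rintro _ ⟨j, hj, rfl⟩
    have hscore : score j ≤ score i := Smaller.score_le hj
    have hj : (score j : ℝ) ≤ B := (Nat.cast_le.2 hscore).trans hi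
    refine (hV _ j _ hj).trans (max_le ?_ (le_max_right _ _))
    rcases le_total (score i) τ with h | h
    · exact le_max_of_le_left (by exact_mod_cast (by omega : τ - score i + score j ≤ τ))
    · rw [Nat.sub_eq_zero_of_le h, zero_add]
      exact le_max_of_le_right hj
  · exact hnonneg

theorem rollVal_le_rollVal_stop {B : ℝ} (hB : 24 ≤ B) {V : GState → ℝ} (hV : StopBounded B V)
    (τ n : ℕ) : rollVal V τ n ≤ rollVal (fun x => max (x.1 : ℝ) B) τ n := by
  refine Finset.sum_le_sum fun k hk => mul_le_mul_of_nonneg_left (hV _ k _ ?_) (by positivity)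
  exact (Nat.cast_le.2 (score_le_of_mem_scoringConfigs hk)).trans (by exact_mod_cast hB)

theorem stopBounded_U {V : GState → ℝ} (hV : StopBounded (111 / 2) V) :
    StopBounded (111 / 2) (U V) := by
  intro τ i n hi
  refine max_le (le_max_left _ _) (max_le ?_ (moveVal_le_of_stopBounded hV τ hi n))
  refine (rollVal_le_rollVal_stop (by norm_num) hV τ n).trans ?_
  rcases le_or_gt 56 τ with h | h
  · exact (rollVal_stop_le_self (by norm_num) h n).trans (le_max_left _ _)
  · exact (rollVal_stop_le_const (by omega) n).trans (le_max_right _ _)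

theorem stopBounded_W (k : ℕ) : StopBounded (111 / 2) (W k) := by
  induction k with
  | zero => exact stopBounded_zero (by norm_num)
  | succ k ih => rw [W, Function.iterate_succ_apply']; exact stopBounded_U ih

theorem le_W_succ (k τ : ℕ) (i : Config) (n : ℕ) : (τ : ℝ) ≤ W (k + 1) (τ, i, n) := by
  rw [W, Function.iterate_succ_apply']
  exact le_max_left _ _

theorem stmt5_general (k : ℕ) (hk : 1 ≤ k) (τ : ℕ) (i : Config) (n : ℕ)
    (hi : i ∈ scoringConfigs) :
    (56 ≤ τ → W k (τ, i, n) = τ) ∧ (τ < 56 → W k (τ, i, n) < 56) := by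
  obtain ⟨k, rfl⟩ := Nat.exists_eq_add_of_le' hk
  have hscore : (score i : ℝ) ≤ 111 / 2 :=
    (Nat.cast_le.2 (score_le_of_mem_scoringConfigs hi)).trans (by norm_num)
  have hupper := stopBounded_W (k + 1) τ i n hscore
  constructor
  · intro h
    have hτ : (111 / 2 : ℝ) ≤ τ := le_trans (by norm_num) (Nat.cast_le.2 h)
    exact le_antisymm (hupper.trans_eq (max_eq_left hτ)) (le_W_succ k τ i n)
  · intro h
    exact hupper.trans_lt (max_lt (by exact_mod_cast h) (by norm_num))

/-- for every `k ≥ 1` and every state `(τ, i, n)`,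
`W_k(τ,i,n) = τ` if `τ ≥ 56`, and `W_k(τ,i,n) < 56` if `τ < 56`. -/
theorem stmt5 (k : ℕ) (hk : 1 ≤ k) (τ : ℕ) (i : Config) (n : ℕ)
    (hi : i ∈ scoringConfigs) (hn : n ∈ Finset.Icc 1 5) (hτ : 1 ≤ τ) :
    (56 ≤ τ → W k (τ, i, n) = τ) ∧ (τ < 56 → W k (τ, i, n) < 56) :=
  stmt5_general k hk τ i n hi
end

section
/- The value function of the solitaire Ten Thousand game is monotone in the accumulated score: V*(τ,i,n) ≤ V*(τ+1,i,n) for all τ ≥ 1, configurations i, and n ∈ {1,...,5}. -/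
/-! Value iteration preserves both monotonicity in `τ` and the bound `max τ s(i) + 288`, so every
iterate `W k` is monotone in `τ` and the iterates are bounded at each state; monotonicity then
passes to the supremum `V*`.  The bound is stable under a roll because a roll scores with
probability at most `12/13` and gains at most `24` chips, and `12/13 · (τ + 24 + 288) ≤ τ + 288`. -/

lemma W_succ (k : ℕ) : W (k + 1) = U (W k) :=
  Function.iterate_succ_apply' U k _

lemma score_le_score_of_smaller {j i : Config} (h : Smaller j i) : score j ≤ score i := by
  obtain ⟨f, o, t⟩ := j
  obtain ⟨f', o', t'⟩ := i
  obtain ⟨hf, ho, ht, -, -⟩ := h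
  change f ≤ f' at hf
  change o ≤ o' at ho
  change t = 0 ∨ t = t' at ht
  simp only [score]
  rcases ht with rfl | rfl <;> split_ifs <;> omega

lemma setOf_smaller_finite (i : Config) : {j : Config | Smaller j i}.Finite := by
  refine (Set.finite_Icc (0 : Config) i).subset ?_
  rintro ⟨f, o, t⟩ ⟨hf, ho, ht, -, -⟩
  refine ⟨bot_le, hf, ho, ?_⟩
  rcases ht with rfl | rfl
  exacts [Nat.zero_le _, le_rfl]

lemma score_le_of_mem_scoringConfigs_s7 : ∀ k ∈ scoringConfigs, score k ≤ 24 := by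
  decide

lemma freq_eq_zero_of_five_lt {n : ℕ} (hn : 5 < n) (k : Config) : freq n k = 0 := by
  obtain ⟨m, rfl⟩ : ∃ m, n = m + 6 := ⟨n - 6, by omega⟩
  unfold freq
  cases freqTable.find? (fun e => decide (e.1 = k)) <;> rfl

lemma thirteen_mul_sum_freq_le (n : ℕ) : 13 * ∑ k ∈ scoringConfigs, freq n k ≤ 12 * 6 ^ n := by
  match n with
  | 0 | 1 | 2 | 3 | 4 | 5 => decide
  | n + 6 =>
    rw [Finset.sum_eq_zero fun k _ => freq_eq_zero_of_five_lt (by omega) k]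
    positivity

section Monotone

def ScoreMonotone (V : GState → ℝ) : Prop :=
  ∀ i n, Monotone fun τ => V (τ, i, n)

variable {V : GState → ℝ}

lemma ScoreMonotone.rollVal (hV : ScoreMonotone V) (n : ℕ) :
    Monotone fun τ => rollVal V τ n := fun τ τ' h =>
  Finset.sum_le_sum fun _ _ => mul_le_mul_of_nonneg_left (hV _ _ (by omega)) (by positivity)

lemma ScoreMonotone.moveVal (hV : ScoreMonotone V) (i : Config) (n : ℕ) :
    Monotone fun τ => moveVal V (τ, i, n) := by
  intro τ τ' h
  simp only [_root_.moveVal]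
  split_ifs
  · have := (setOf_smaller_finite i).to_subtype
    rw [sSup_image', sSup_image']
    exact ciSup_mono (Set.finite_range _).bddAbove fun j => hV _ _ (by omega)
  · exact le_rfl

lemma ScoreMonotone.U (hV : ScoreMonotone V) : ScoreMonotone (U V) := fun i n =>
  Nat.mono_cast.max ((hV.rollVal n).max (hV.moveVal i n))

lemma scoreMonotone_W (k : ℕ) : ScoreMonotone (W k) := by
  induction k with
  | zero => exact fun _ _ => monotone_const
  | succ k ih => rw [W_succ]; exact ih.U

end Monotone

section Bound

/-- The `max` with `s(i)` absorbs the truncated subtraction `τ - s(i)` of a move. -/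
def valueBound : GState → ℝ
  | (τ, i, _) => (max τ (score i) : ℕ) + 288

variable {V : GState → ℝ}

lemma rollVal_le (hV : ∀ x, V x ≤ valueBound x) (τ n : ℕ) : rollVal V τ n ≤ τ + 288 := by
  have hsum : (∑ k ∈ scoringConfigs, (freq n k : ℝ)) / 6 ^ n ≤ 12 / 13 := by
    rw [div_le_div_iff₀ (by positivity) (by norm_num)]
    exact_mod_cast (mul_comm _ _).le.trans (thirteen_mul_sum_freq_le n)
  calc rollVal V τ n
      ≤ ∑ k ∈ scoringConfigs, (freq n k : ℝ) / 6 ^ n * (τ + 312) := by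
        refine Finset.sum_le_sum fun k hk => mul_le_mul_of_nonneg_left ((hV _).trans ?_)
          (by positivity)
        have : (score k : ℝ) ≤ 24 := by exact_mod_cast score_le_of_mem_scoringConfigs_s7 k hk
        simp only [valueBound, show max (τ + score k) (score k) = τ + score k by omega]
        push_cast
        linarith
    _ = (∑ k ∈ scoringConfigs, (freq n k : ℝ)) / 6 ^ n * (τ + 312) := by
        rw [Finset.sum_div, Finset.sum_mul]
    _ ≤ 12 / 13 * (τ + 312) := by gcongr
    _ ≤ τ + 288 := by linarith [(Nat.cast_nonneg τ : (0 : ℝ) ≤ τ)]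

lemma moveVal_le (hV : ∀ x, V x ≤ valueBound x) (x : GState) : moveVal V x ≤ valueBound x := by
  obtain ⟨τ, i, n⟩ := x
  have hpos : 0 ≤ valueBound (τ, i, n) := by simp only [valueBound]; positivity
  simp only [moveVal]
  split_ifs
  · refine Real.sSup_le ?_ hpos
    rintro _ ⟨j, hj, rfl⟩
    refine (hV _).trans ?_
    have hji := score_le_score_of_smaller hj
    have hmax : max (τ - score i + score j) (score j) ≤ max τ (score i) := by omega
    simpa only [valueBound, add_le_add_iff_right, Nat.cast_le] using hmax
  · exact hpos

lemma U_le_valueBound (hV : ∀ x, V x ≤ valueBound x) (x : GState) : U V x ≤ valueBound x := by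
  obtain ⟨τ, i, n⟩ := x
  have hτ : (τ : ℝ) + 288 ≤ valueBound (τ, i, n) := by
    simp only [valueBound]
    gcongr
    exact le_max_left _ _
  exact max_le (by linarith) (max_le ((rollVal_le hV τ n).trans hτ) (moveVal_le hV _))

lemma W_le_valueBound (k : ℕ) (x : GState) : W k x ≤ valueBound x := by
  induction k generalizing x with
  | zero => simp only [W, Function.iterate_zero, id, valueBound]; positivity
  | succ k ih => rw [W_succ]; exact U_le_valueBound ih x

end Bound

lemma scoreMonotone_Vstar : ScoreMonotone Vstar := fun i n τ τ' h =>
  ciSup_mono ⟨valueBound (τ', i, n), by rintro _ ⟨k, rfl⟩; exact W_le_valueBound k _⟩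
    fun k => scoreMonotone_W k i n h

theorem stmt7_general (τ : ℕ) (i : Config) (n : ℕ) :
    Vstar (τ, i, n) ≤ Vstar (τ + 1, i, n) :=
  scoreMonotone_Vstar i n τ.le_succ

/-- the value function is monotone in the accumulated score:
`V*(τ,i,n) ≤ V*(τ+1,i,n)`. -/
theorem stmt7 (τ : ℕ) (i : Config) (n : ℕ)
    (hi : i ∈ scoringConfigs) (hn : n ∈ Finset.Icc 1 5) (hτ : 1 ≤ τ) :
    Vstar (τ, i, n) ≤ Vstar (τ + 1, i, n) :=
  stmt7_general τ i n
end
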